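/- arXiv:1706.02918 — 2 statements merged into one kernel-verified Lean document; each statement's English description precedes it below -/
import Mathlib

section
/- Let p be an odd prime, let l be an integer with l ≥ 2, let K = ZMod p, and let V = Fin l → K with standard basis e₁, …, e_l. In the (l+1)-fold tensor power V^{⊗(l+1)} over K, define for each 1 ≤ i ≤ l and 1 ≤ j ≤ l+1 the vector w_{i,j} := Σ_{τ ∈ S_l} sgn(τ) · e_{τ(1)} ⊗ ⋯ ⊗ e_{τ(j−1)} ⊗ e_i ⊗ e_{τ(j)} ⊗ ⋯ ⊗ e_{τ(l)} (the antisymmetrization of e₁ ⊗ ⋯ ⊗ e_l with an extra factor e_i inserted in the j-th tensor slot, the sum running over all permutations τ of {1, …, l}). Then for scalars c_{i,j} ∈ K (1 ≤ i ≤ l, 1 ≤ j ≤ l+1), the relation Σ_{i=1}^{l} Σ_{j=1}^{l+1} c_{i,j} · w_{i,j} = 0 holds in V^{⊗(l+1)} if and only if c_{i,j} = (−1)^{j−1} · c_{i,1} for all i and j, i.e., c_{i,1} = −c_{i,2} = c_{i,3} = ⋯ = (−1)^{l} c_{i,l+1} for each i. -/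
open scoped TensorProduct

/-- The generator `w i j`: the antisymmetrization of `e₁ ⊗ ⋯ ⊗ e_l` with an
extra factor `e i` inserted in the `j`-th tensor slot, in the `(l+1)`-fold
tensor power of `Fin l → ZMod p` over `ZMod p`. -/
noncomputable def insertedAntisymmetrizer (p l : ℕ) (i : Fin l) (j : Fin (l + 1)) :
    ⨂[ZMod p] (_ : Fin (l + 1)), (Fin l → ZMod p) :=
  ∑ τ : Equiv.Perm (Fin l),
    (((Equiv.Perm.sign τ : ℤ) : ZMod p)) •
      PiTensorProduct.tprod (ZMod p)
        (j.succAboveCases (Pi.single i (1 : ZMod p))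
          (fun s : Fin l => Pi.single (τ s) (1 : ZMod p)))

/-!
Let `e` be the standard basis. The coefficient of `e_{f 0} ⊗ ⋯ ⊗ e_{f l}` in `w i k` is `sign τ`
if `f` is obtained by inserting `i` at slot `k` into the permutation `τ`, and `0` otherwise.
The tuple `f = σ ∘ predAbove j` repeats the value `σ j` in the adjacent slots `j` and `j + 1`,
so it arises in this way only from `w (σ j) j` and `w (σ j) (j + 1)`, both times with `τ = σ`;
comparing coefficients of `e_f` in a relation gives `c (σ j) (j + 1) = -c (σ j) j`.

Conversely, expanding along the position of the first factor, `∑ k, (-1) ^ k • w i k` is the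
antisymmetrization of `e_i ⊗ e_0 ⊗ ⋯ ⊗ e_{l-1}`, which vanishes since `e_i` occurs twice.
-/

namespace Fin

variable {α : Type*} {n : ℕ}

theorem predAbove_succ_succAbove (j i : Fin n) : j.predAbove (j.succ.succAbove i) = i :=
  succAbove_right_injective (succ_succAbove_predAbove (succAbove_ne _ _))

theorem comp_predAbove_eq_insertNth_castSucc (v : Fin n → α) (j : Fin n) :
    v ∘ j.predAbove = insertNth j.castSucc (v j) v := by
  rw [eq_insertNth_iff]
  exact ⟨by simp, funext fun i => by simp [removeNth]⟩

theorem comp_predAbove_eq_insertNth_succ (v : Fin n → α) (j : Fin n) :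
    v ∘ j.predAbove = insertNth j.succ (v j) v := by
  rw [eq_insertNth_iff]
  exact ⟨by simp, funext fun i => by simp [removeNth, predAbove_succ_succAbove]⟩

theorem insertNth_eq_comp_predAbove_iff {v u : Fin n → α} (hu : Function.Injective u)
    {j : Fin n} {k : Fin (n + 1)} {x : α} :
    insertNth k x u = v ∘ j.predAbove ↔ x = v j ∧ (k = j.castSucc ∨ k = j.succ) ∧ u = v := by
  constructor
  · intro h
    have hk : k = j.castSucc ∨ k = j.succ := by
      by_contra! hne
      obtain ⟨a, ha⟩ := exists_succAbove_eq hne.1.symm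
      obtain ⟨b, hb⟩ := exists_succAbove_eq hne.2.symm
      have hab : u a = u b := by
        have hu' : ∀ c, u c = v (j.predAbove (k.succAbove c)) := fun c =>
          (insertNth_apply_succAbove (α := fun _ => α) k x u c).symm.trans (congrFun h _)
        rw [hu', hu', ha, hb, predAbove_castSucc_self, predAbove_succ_self]
      exact castSucc_lt_succ.ne (by rw [← ha, ← hb, hu hab])
    rcases hk with rfl | rfl
    · rw [comp_predAbove_eq_insertNth_castSucc, insertNth_inj] at h
      exact ⟨h.1, .inl rfl, h.2⟩
    · rw [comp_predAbove_eq_insertNth_succ, insertNth_inj] at h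
      exact ⟨h.1, .inr rfl, h.2⟩
  · rintro ⟨rfl, rfl | rfl, rfl⟩
    · exact (comp_predAbove_eq_insertNth_castSucc _ _).symm
    · exact (comp_predAbove_eq_insertNth_succ _ _).symm

theorem comp_insertNth {β : Type*} (g : α → β) (k : Fin (n + 1)) (x : α) (v : Fin n → α) :
    g ∘ insertNth k x v = insertNth k (g x) (g ∘ v) := by
  rw [eq_insertNth_iff]
  exact ⟨by simp, funext fun i => by simp [removeNth]⟩

end Fin

section Permutations

open Equiv Equiv.Perm

variable {n : ℕ}

theorem Fin.cons_comp_decomposeFin_symm_mul_cycleRange {α : Type*} (x : α) (v : Fin n → α)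
    (k : Fin (n + 1)) (τ : Perm (Fin n)) :
    Fin.cons x v ∘ ⇑(decomposeFin.symm (0, τ) * k.cycleRange) = Fin.insertNth k x (v ∘ τ) := by
  rw [Fin.eq_insertNth_iff]
  exact ⟨by simp, funext fun i => by simp [Fin.removeNth]⟩

theorem Equiv.Perm.sign_decomposeFin_symm_mul_cycleRange (k : Fin (n + 1)) (τ : Perm (Fin n)) :
    sign (decomposeFin.symm (0, τ) * k.cycleRange) = (-1) ^ (k : ℕ) * sign τ := by
  simp [mul_comm]

theorem Equiv.Perm.bijective_decomposeFin_symm_mul_cycleRange :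
    Function.Bijective fun x : Fin (n + 1) × Perm (Fin n) =>
      decomposeFin.symm (0, x.2) * x.1.cycleRange := by
  rw [Fintype.bijective_iff_injective_and_card]
  refine ⟨?_, by simp [Fintype.card_perm, Nat.factorial_succ]⟩
  rintro ⟨k, τ⟩ ⟨k', τ'⟩ (h : decomposeFin.symm (0, τ) * k.cycleRange =
    decomposeFin.symm (0, τ') * k'.cycleRange)
  have hk : k = k' := by
    have e : (decomposeFin.symm (0, τ) * k.cycleRange) k = 0 := by simp
    have e' : (decomposeFin.symm (0, τ') * k'.cycleRange) k' = 0 := by simp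
    rw [h] at e
    exact (decomposeFin.symm (0, τ') * k'.cycleRange).injective (e.trans e'.symm)
  subst hk
  rw [(Prod.mk.inj (decomposeFin.symm.injective (mul_right_cancel h))).2]

theorem MultilinearMap.alternatization_cons {R M N : Type*} [Semiring R] [AddCommMonoid M]
    [Module R M] [AddCommGroup N] [Module R N] (m : MultilinearMap R (fun _ : Fin (n + 1) => M) N)
    (x : M) (v : Fin n → M) :
    alternatization m (Fin.cons x v) =
      ∑ k : Fin (n + 1), (-1 : ℤˣ) ^ (k : ℕ) •
        ∑ τ : Perm (Fin n), sign τ • m (Fin.insertNth k x (v ∘ τ)) := by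
  rw [alternatization_apply, ← bijective_decomposeFin_symm_mul_cycleRange.sum_comp,
    Fintype.sum_prod_type]
  refine Finset.sum_congr rfl fun k _ => ?_
  rw [Finset.smul_sum]
  refine Finset.sum_congr rfl fun τ _ => ?_
  rw [domDomCongr_apply, sign_decomposeFin_symm_mul_cycleRange, mul_smul]
  congr
  exact Fin.cons_comp_decomposeFin_symm_mul_cycleRange x v k τ

end Permutations

section InsertedAntisymmetrizer

open Equiv Equiv.Perm

variable (p l : ℕ)

noncomputable abbrev tensorPowerBasis :
    Module.Basis (Fin (l + 1) → Fin l) (ZMod p) (⨂[ZMod p] (_ : Fin (l + 1)), (Fin l → ZMod p)) :=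
  Basis.piTensorProduct fun _ => Pi.basisFun (ZMod p) (Fin l)

theorem insertedAntisymmetrizer_eq_sum_tprod (i : Fin l) (j : Fin (l + 1)) :
    insertedAntisymmetrizer p l i j = ∑ τ : Perm (Fin l), sign τ •
      PiTensorProduct.tprod (ZMod p)
        (Fin.insertNth j (Pi.basisFun (ZMod p) (Fin l) i) (Pi.basisFun (ZMod p) (Fin l) ∘ τ)) := by
  refine Finset.sum_congr rfl fun τ _ => ?_
  rw [Units.smul_def, ← Int.cast_smul_eq_zsmul (ZMod p), Fin.succAbove_cases_eq_insertNth]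
  simp only [Pi.basisFun_apply, Function.comp_def]

theorem sum_neg_one_pow_smul_insertedAntisymmetrizer (i : Fin l) :
    ∑ j : Fin (l + 1), (-1 : ZMod p) ^ (j : ℕ) • insertedAntisymmetrizer p l i j = 0 := by
  have h := (MultilinearMap.alternatization (PiTensorProduct.tprod (ZMod p))).map_eq_zero_of_eq
    (Fin.cons (Pi.basisFun (ZMod p) (Fin l) i) (Pi.basisFun (ZMod p) (Fin l))) (i := 0)
    (j := i.succ) rfl (Fin.succ_ne_zero i).symm
  rw [MultilinearMap.alternatization_cons] at h
  rw [← h]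
  refine Finset.sum_congr rfl fun j _ => ?_
  rw [insertedAntisymmetrizer_eq_sum_tprod, Units.smul_def ((-1 : ℤˣ) ^ (j : ℕ)),
    ← Int.cast_smul_eq_zsmul (ZMod p)]
  push_cast
  rfl

theorem repr_insertedAntisymmetrizer (i : Fin l) (j : Fin (l + 1)) (f : Fin (l + 1) → Fin l) :
    (tensorPowerBasis p l).repr (insertedAntisymmetrizer p l i j) f =
      ∑ τ : Perm (Fin l), if Fin.insertNth j i τ = f then ((sign τ : ℤ) : ZMod p) else 0 := by
  rw [insertedAntisymmetrizer_eq_sum_tprod, map_sum, Finsupp.finsetSum_apply]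
  refine Finset.sum_congr rfl fun τ _ => ?_
  have hb : PiTensorProduct.tprod (ZMod p) (Fin.insertNth j (Pi.basisFun (ZMod p) (Fin l) i)
      (Pi.basisFun (ZMod p) (Fin l) ∘ τ)) = tensorPowerBasis p l (Fin.insertNth j i τ) := by
    rw [Basis.piTensorProduct_apply, ← Fin.comp_insertNth]
    rfl
  rw [hb, Units.smul_def, map_zsmul, Module.Basis.repr_self, Finsupp.smul_apply,
    Finsupp.single_apply, zsmul_eq_mul]
  split_ifs <;> simp

theorem coeff_succ_eq_neg_of_sum_eq_zero {p l : ℕ} {c : Fin l → Fin (l + 1) → ZMod p}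
    (hsum : ∑ i : Fin l, ∑ j : Fin (l + 1), c i j • insertedAntisymmetrizer p l i j = 0)
    (σ : Perm (Fin l)) (j : Fin l) : c (σ j) j.succ = -c (σ j) j.castSucc := by
  have h := congrArg (fun t => (tensorPowerBasis p l).repr t (σ ∘ j.predAbove)) hsum
  simp only [map_sum, map_smul, Finsupp.finsetSum_apply, Finsupp.smul_apply,
    repr_insertedAntisymmetrizer, Fin.insertNth_eq_comp_predAbove_iff (Equiv.injective _),
    smul_eq_mul, map_zero, Finsupp.zero_apply] at h
  simp only [DFunLike.coe_fn_eq, ite_and, Finset.sum_ite_irrel, Finset.sum_ite_eq',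
    Finset.mem_univ, ↓reduceIte, Finset.sum_const_zero, mul_ite, mul_zero] at h
  have hunit : IsUnit ((sign σ : ℤ) : ZMod p) := (sign σ).isUnit.map (Int.castRingHom (ZMod p))
  rw [Fintype.sum_eq_add _ _ Fin.castSucc_lt_succ.ne fun k hk => if_neg (by tauto),
    if_pos (.inl rfl), if_pos (.inr rfl), ← add_mul, hunit.mul_left_eq_zero] at h
  exact eq_neg_of_add_eq_zero_right h

end InsertedAntisymmetrizer

theorem linear_relation_iff_alternating_general (p : ℕ)
    (l : ℕ)
    (c : Fin l → Fin (l + 1) → ZMod p) :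
    (∑ i : Fin l, ∑ j : Fin (l + 1), c i j • insertedAntisymmetrizer p l i j = 0) ↔
      ∀ (i : Fin l) (j : Fin (l + 1)), c i j = (-1) ^ (j : ℕ) * c i 0 := by
  constructor
  · intro hsum i j
    induction j using Fin.induction with
    | zero => simp
    | succ j ih =>
      have hstep := coeff_succ_eq_neg_of_sum_eq_zero hsum (Equiv.swap i j) j
      rw [Equiv.swap_apply_right] at hstep
      rw [hstep, ih, Fin.val_castSucc, Fin.val_succ, pow_succ]
      ring
  · intro hc
    calc ∑ i : Fin l, ∑ j : Fin (l + 1), c i j • insertedAntisymmetrizer p l i j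
        = ∑ i : Fin l, c i 0 •
            ∑ j : Fin (l + 1), (-1 : ZMod p) ^ (j : ℕ) • insertedAntisymmetrizer p l i j := by
          refine Finset.sum_congr rfl fun i _ => ?_
          rw [Finset.smul_sum]
          refine Finset.sum_congr rfl fun j _ => ?_
          rw [hc, mul_comm, mul_smul]
      _ = 0 := by simp [sum_neg_one_pow_smul_insertedAntisymmetrizer]

/-- Lemma 5.1 (even-degree case): a linear relation
`∑_{i,j} c i j • w i j = 0` among the vectors `w i j` holds iff
`c i j = (-1)^j · c i 0` for all `i, j` (0-indexed slots), i.e.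
`c_{i,1} = -c_{i,2} = c_{i,3} = ⋯ = (-1)^l c_{i,l+1}` for each `i`. -/
theorem linear_relation_iff_alternating (p : ℕ) (hp : p.Prime) (hodd : Odd p)
    (l : ℕ) (hl : 2 ≤ l)
    (c : Fin l → Fin (l + 1) → ZMod p) :
    (∑ i : Fin l, ∑ j : Fin (l + 1), c i j • insertedAntisymmetrizer p l i j = 0) ↔
      ∀ (i : Fin l) (j : Fin (l + 1)), c i j = (-1) ^ (j : ℕ) * c i 0 :=
  linear_relation_iff_alternating_general p l c
end

section
/- Let p be an odd prime, let l be an integer with l ≥ 2, let K = ZMod p, and let V = Fin l → K with standard basis e₁, …, e_l. In V^{⊗(l+1)} define w_{i,j} := Σ_{τ ∈ S_l} sgn(τ) · e_{τ(1)} ⊗ ⋯ ⊗ e_{τ(j−1)} ⊗ e_i ⊗ e_{τ(j)} ⊗ ⋯ ⊗ e_{τ(l)} for 1 ≤ i ≤ l and 1 ≤ j ≤ l+1. Then the l² vectors w_{i,j} with 1 ≤ i ≤ l and 1 ≤ j ≤ l (i.e., omitting the slot j = l+1) are linearly independent over K. -/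
open scoped TensorProduct

/-- The coordinate functional on the tensor power given by multiplying the
`f k`-th coordinates of the factors. -/
noncomputable def tensorCoordFn (p l : ℕ) (f : Fin (l + 1) → Fin l) :
    (⨂[ZMod p] (_ : Fin (l + 1)), (Fin l → ZMod p)) →ₗ[ZMod p] ZMod p :=
  PiTensorProduct.lift
    ((MultilinearMap.mkPiAlgebra (ZMod p) (Fin (l + 1)) (ZMod p)).compLinearMap
      (fun k => LinearMap.proj (f k)))

lemma prod_single_indicator (p l n : ℕ) (a b : Fin n → Fin l) :
    (∏ s : Fin n, if a s = b s then (1 : ZMod p) else 0) = if a = b then 1 else 0 := by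
  split_ifs with h
  · simp [funext_iff.mp h]
  · obtain ⟨s, hs⟩ := Function.ne_iff.mp h
    exact Finset.prod_eq_zero (Finset.mem_univ s) (by simp [hs])

lemma tensorCoordFn_tprod (p l : ℕ) (f : Fin (l + 1) → Fin l)
    (i : Fin l) (j : Fin (l + 1)) (τ : Equiv.Perm (Fin l)) :
    tensorCoordFn p l f
      (PiTensorProduct.tprod (ZMod p)
        (j.succAboveCases (α := fun _ => Fin l → ZMod p) (Pi.single i (1 : ZMod p))
          (fun s : Fin l => Pi.single (τ s) (1 : ZMod p))))
    = (if f j = i then 1 else 0) *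
        (if (fun s => f (j.succAbove s)) = ⇑τ then (1 : ZMod p) else 0) := by
  rw [tensorCoordFn, PiTensorProduct.lift.tprod]
  simp only [MultilinearMap.compLinearMap_apply, MultilinearMap.mkPiAlgebra_apply,
    LinearMap.proj_apply]
  rw [Fin.prod_univ_succAbove _ j]
  show (Fin.insertNth (α := fun _ => Fin l → ZMod p) j (Pi.single i (1 : ZMod p))
        (fun s : Fin l => Pi.single (τ s) (1 : ZMod p)) j) (f j) *
      ∏ s : Fin l, (Fin.insertNth (α := fun _ => Fin l → ZMod p) j (Pi.single i (1 : ZMod p))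
        (fun s : Fin l => Pi.single (τ s) (1 : ZMod p)) (j.succAbove s)) (f (j.succAbove s)) = _
  simp only [Fin.insertNth_apply_same, Fin.insertNth_apply_succAbove, Pi.single_apply]
  rw [prod_single_indicator]

lemma tensorCoordFn_w (p l : ℕ) (f : Fin (l + 1) → Fin l) (i : Fin l) (j : Fin (l + 1)) :
    tensorCoordFn p l f (insertedAntisymmetrizer p l i j)
    = ∑ τ : Equiv.Perm (Fin l),
        ((Equiv.Perm.sign τ : ℤ) : ZMod p) *
          ((if f j = i then 1 else 0) *
            (if (fun s => f (j.succAbove s)) = ⇑τ then (1 : ZMod p) else 0)) := by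
  rw [insertedAntisymmetrizer, map_sum]
  simp only [map_smul, smul_eq_mul, tensorCoordFn_tprod]

/-- Consequence of Lemma 5.1 used in Proposition 5.2: the `l²` vectors
`w i j` with `1 ≤ i ≤ l` and `1 ≤ j ≤ l` (omitting the last slot `j = l+1`)
are linearly independent over `ZMod p`. -/
theorem linearIndependent_insertedAntisymmetrizer
    (p : ℕ) (hp : p.Prime) (hodd : Odd p) (l : ℕ) (hl : 2 ≤ l) :
    LinearIndependent (ZMod p)
      (fun ij : Fin l × Fin l =>
        insertedAntisymmetrizer p l ij.1 ij.2.castSucc) := by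
  classical
  haveI : Fact p.Prime := ⟨hp⟩
  rw [Fintype.linearIndependent_iff]
  intro g hg ij
  obtain ⟨i₀, j₀⟩ := ij
  set σ : Equiv.Perm (Fin l) := Equiv.swap j₀ i₀ with hσdef
  set f : Fin (l + 1) → Fin l := Fin.snoc (⇑σ) i₀ with hfdef
  have hflast : f (Fin.last l) = i₀ := Fin.snoc_last _ _
  have hfcast : ∀ s : Fin l, f s.castSucc = σ s := fun s => Fin.snoc_castSucc _ _ s
  have hσj₀ : σ j₀ = i₀ := Equiv.swap_apply_left _ _
  have hσval : ∀ s : Fin l, σ s = i₀ → s = j₀ := fun s h =>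
    σ.injective (h.trans hσj₀.symm)
  have hfj₀ : f (Fin.castSucc j₀) = i₀ := (hfcast j₀).trans hσj₀
  -- f is injective away from `castSucc j₀`
  have hfinj : ∀ a b : Fin (l + 1), a ≠ Fin.castSucc j₀ → b ≠ Fin.castSucc j₀ →
      f a = f b → a = b := by
    intro a b ha hb hab
    induction a using Fin.lastCases with
    | last =>
      induction b using Fin.lastCases with
      | last => rfl
      | cast s =>
        rw [hflast, hfcast] at hab
        exact absurd (congrArg Fin.castSucc (hσval s hab.symm)) hb
    | cast t =>
      induction b using Fin.lastCases with
      | last =>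
        rw [hflast, hfcast] at hab
        exact absurd (congrArg Fin.castSucc (hσval t hab)) ha
      | cast s =>
        rw [hfcast, hfcast] at hab
        exact congrArg Fin.castSucc (σ.injective hab)
  -- the permutation matching the slot `j₀`
  have hg₀inj : Function.Injective (fun s => f ((Fin.castSucc j₀).succAbove s)) := by
    intro a b hab
    exact Fin.succAbove_right_injective
      (hfinj _ _ (Fin.succAbove_ne _ _) (Fin.succAbove_ne _ _) hab)
  set τ₀ : Equiv.Perm (Fin l) :=
    Equiv.ofBijective _ (Finite.injective_iff_bijective.mp hg₀inj) with hτ₀def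
  have hτ₀ : ∀ s, τ₀ s = f ((Fin.castSucc j₀).succAbove s) := fun s => rfl
  -- value of the coordinate functional on the family
  have hval : ∀ i j' : Fin l,
      tensorCoordFn p l f (insertedAntisymmetrizer p l i (Fin.castSucc j'))
      = if (i, j') = (i₀, j₀) then ((Equiv.Perm.sign τ₀ : ℤ) : ZMod p) else 0 := by
    intro i j'
    rw [tensorCoordFn_w]
    by_cases hj : j' = j₀
    · by_cases hi : i = i₀
      · rw [hi, hj, if_pos rfl]
        rw [Finset.sum_eq_single τ₀]
        · rw [if_pos hfj₀, if_pos (funext fun s => (hτ₀ s).symm), mul_one, mul_one]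
        · intro τ _ hτ
          rw [if_neg (show ¬ ((fun s => f ((Fin.castSucc j₀).succAbove s)) = ⇑τ) from
            fun hc => hτ (Equiv.coe_fn_injective (show ⇑τ = ⇑τ₀ from hc.symm))),
            mul_zero, mul_zero]
        · intro h; exact absurd (Finset.mem_univ τ₀) h
      · rw [if_neg (show ¬ ((i, j') = (i₀, j₀)) by simp [hi])]
        apply Finset.sum_eq_zero
        intro τ _
        rw [if_neg (show ¬ (f (Fin.castSucc j') = i) by
            rw [hj, hfj₀]; exact fun h => hi h.symm), zero_mul, mul_zero]
    · rw [if_neg (show ¬ ((i, j') = (i₀, j₀)) by simp [hj])]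
      apply Finset.sum_eq_zero
      intro τ _
      rw [if_neg (show ¬ ((fun s => f ((Fin.castSucc j').succAbove s)) = ⇑τ) from ?_),
        mul_zero, mul_zero]
      intro hcontra
      obtain ⟨s₁, hs₁⟩ := Fin.exists_succAbove_eq
        (show Fin.last l ≠ Fin.castSucc j' from (Fin.castSucc_lt_last j').ne')
      obtain ⟨s₂, hs₂⟩ := Fin.exists_succAbove_eq
        (show Fin.castSucc j₀ ≠ Fin.castSucc j' from
          fun h => hj (Fin.castSucc_injective _ h).symm)
      have h₁ : τ s₁ = i₀ := by
        have := congrFun hcontra s₁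
        rw [hs₁, hflast] at this
        exact this.symm
      have h₂ : τ s₂ = i₀ := by
        have := congrFun hcontra s₂
        rw [hs₂, hfj₀] at this
        exact this.symm
      have hs : s₁ = s₂ := τ.injective (h₁.trans h₂.symm)
      rw [hs, hs₂] at hs₁
      exact (Fin.castSucc_lt_last j₀).ne hs₁
  -- apply the functional to the vanishing combination
  have h0 : ∑ ij : Fin l × Fin l,
      g ij * tensorCoordFn p l f (insertedAntisymmetrizer p l ij.1 ij.2.castSucc) = 0 := by
    have := congrArg (tensorCoordFn p l f) hg
    simpa [map_sum, map_smul, smul_eq_mul] using this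
  simp only [hval, Prod.mk.eta, mul_ite, mul_zero] at h0
  rw [Finset.sum_ite_eq' Finset.univ ((i₀, j₀) : Fin l × Fin l)
    (fun ij => g ij * ((Equiv.Perm.sign τ₀ : ℤ) : ZMod p)), if_pos (Finset.mem_univ _)] at h0
  have hε : ((Equiv.Perm.sign τ₀ : ℤ) : ZMod p) ≠ 0 := by
    rcases Int.units_eq_one_or (Equiv.Perm.sign τ₀) with h | h <;> rw [h]
    · simpa using one_ne_zero
    · simpa using (neg_ne_zero.mpr (one_ne_zero (α := ZMod p)))
  exact (mul_eq_zero.mp h0).resolve_right hε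
end
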